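/- Let Sⁿ_{s₀} = ∑_{z̃ ∈ Ωⁿ_{s₀}} Pⁿ_{s₀}(z̃). Then S⁰_{s₀} = 1 and for n ≥ 1 the recursion Sⁿ_{s₀} = ∑_{s₁ ∈ S} δ(s₀)(ε, s₁)·Sⁿ_{s₁} + ∑_{a₁ ∈ Σ, s₁ ∈ S} δ(s₀)(a₁, s₁)·Sⁿ⁻¹_{s₁} holds. -/

import Mathlib

open scoped ENNReal

/-- A Hidden Markov Model with ε-transitions: a finite state space `S`, a finite
alphabet `A`, and for each state a probability function on `(Σ ∪ {ε}) × S`,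
where `ε` is modelled by `none`. -/
structure HMMeps (S A : Type*) [Fintype S] [Fintype A] where
  δ : S → Option A × S → ℝ≥0∞
  sum_one : ∀ s : S, ∑ p : Option A × S, δ s p = 1

namespace HMMeps

variable {S A : Type*} [Fintype S] [Fintype A]

/-- The probability of an alternating sequence `s₀ a₁ s₁ … a_m s_m`, represented by
its start state `s₀` together with the list of steps `[(a₁,s₁),…,(a_m,s_m)]`:
the product of the transition probabilities. -/
noncomputable def pathProb (M : HMMeps S A) : S → List (Option A × S) → ℝ≥0∞
  | _, [] => 1
  | s, p :: rest => M.δ s p * M.pathProb p.2 rest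

/-- The observable projection `Y`: the sequence of observable symbols
(ε's and states removed). -/
def obsSeq (z : List (Option A × S)) : List A := z.filterMap Prod.fst

/-- The last state `L` of a sequence starting in `s₀`. -/
def lastState (s₀ : S) (z : List (Option A × S)) : S :=
  (z.getLast?.map Prod.snd).getD s₀

/-- The sample space `Ωⁿ_{s₀} = s₀((εS)*ΣS)ⁿ`: alternating sequences containing
exactly `n` observable symbols whose second-to-last element (i.e. the symbol of the
last transition) is observable.  (The start state is kept separately, so an element
of the sample space is just the list of steps.) -/
def Omega (S A : Type*) (n : ℕ) : Set (List (Option A × S)) :=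
  {z | (obsSeq z).length = n ∧ ∀ p ∈ z.getLast?, (Prod.fst p).isSome = true}

end HMMeps

/-! A nonempty step sequence splits uniquely as a first step `(a₁, s₁)` followed by a tail, and
`pathProb` factors accordingly as `δ(s₀)(a₁, s₁)` times the probability of the tail from `s₁`.
Membership in `Ωⁿ` passes to the tail with `n` unchanged after an ε-step and lowered by one after
an observable step, so summing over first steps and tails gives the recursion. The only sequence
without observable symbols whose last symbol is observable is the empty one, whence `S⁰ = 1`. -/

theorem tsum_list_eq_tsum_cons {α M : Type*} [AddCommMonoid M] [TopologicalSpace M]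
    {f : List α → M} (hf : f [] = 0) :
    ∑' l, f l = ∑' q : α × List α, f (q.1 :: q.2) := by
  refine (Function.Injective.tsum_eq (fun q q' h => ?_) fun l hl => ?_).symm
  · obtain ⟨h₁, h₂⟩ := List.cons_eq_cons.mp h
    exact Prod.ext h₁ h₂
  · cases l with
    | nil => exact absurd hf hl
    | cons a l => exact ⟨(a, l), rfl⟩

namespace HMMeps

section Omega

variable {S A : Type*}

theorem nil_mem_Omega_iff {n : ℕ} : ([] : List (Option A × S)) ∈ Omega S A n ↔ n = 0 := by
  simp [Omega, obsSeq, @eq_comm ℕ 0]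

theorem Omega_zero : Omega S A 0 = {[]} := by
  refine Set.eq_singleton_iff_unique_mem.mpr ⟨nil_mem_Omega_iff.mpr rfl, fun z ⟨hlen, hlast⟩ => ?_⟩
  by_contra hz
  obtain ⟨a, ha⟩ := Option.isSome_iff_exists.mp (hlast _ (List.getLast?_eq_some_getLast hz))
  have ha_obs : a ∈ obsSeq z := List.mem_filterMap.mpr ⟨_, List.getLast_mem hz, ha⟩
  exact List.not_mem_nil (List.length_eq_zero_iff.mp hlen ▸ ha_obs)

theorem cons_none_mem_Omega_iff {n : ℕ} (hn : n ≠ 0) {s : S} {z : List (Option A × S)} :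
    (none, s) :: z ∈ Omega S A n ↔ z ∈ Omega S A n := by
  cases z with
  | nil => simpa [Omega, obsSeq] using hn.symm
  | cons q z => simp [Omega, obsSeq]

theorem cons_some_mem_Omega_iff {n : ℕ} {a : A} {s : S} {z : List (Option A × S)} :
    (some a, s) :: z ∈ Omega S A (n + 1) ↔ z ∈ Omega S A n := by
  cases z with
  | nil => simp [Omega, obsSeq, @eq_comm ℕ 0]
  | cons q z => simp [Omega, obsSeq]

end Omega

variable {S A : Type*} [Fintype S] [Fintype A] (M : HMMeps S A)

/-- `Sⁿ_s` in the notation of the statement. -/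
noncomputable def omegaMass (n : ℕ) (s : S) : ℝ≥0∞ :=
  ∑' z : Omega S A n, M.pathProb s z.1

theorem tsum_indicator_pathProb_cons {s : S} {p : Option A × S}
    {t u : Set (List (Option A × S))} (h : ∀ z, p :: z ∈ t ↔ z ∈ u) :
    ∑' z, t.indicator (M.pathProb s) (p :: z) = M.δ s p * ∑' z : u, M.pathProb p.2 z := by
  rw [tsum_subtype, ← ENNReal.tsum_mul_left]
  refine tsum_congr fun z => ?_
  classical
  simp only [Set.indicator_apply, h, pathProb, mul_ite, mul_zero]

theorem omegaMass_zero (s : S) : M.omegaMass 0 s = 1 := by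
  rw [omegaMass, Omega_zero, tsum_singleton]
  rfl

theorem omegaMass_succ (n : ℕ) (s : S) :
    M.omegaMass (n + 1) s
      = ∑ s₁, M.δ s (none, s₁) * M.omegaMass (n + 1) s₁
        + ∑ a, ∑ s₁, M.δ s (some a, s₁) * M.omegaMass n s₁ := by
  calc M.omegaMass (n + 1) s
      = ∑' z, (Omega S A (n + 1)).indicator (M.pathProb s) z := tsum_subtype _ _
    _ = ∑' q : (Option A × S) × List (Option A × S),
          (Omega S A (n + 1)).indicator (M.pathProb s) (q.1 :: q.2) :=
        tsum_list_eq_tsum_cons (by simp [nil_mem_Omega_iff])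
    _ = ∑ p, ∑' z, (Omega S A (n + 1)).indicator (M.pathProb s) (p :: z) := by
        rw [ENNReal.tsum_prod', tsum_fintype]
    _ = _ := by
        simp only [Fintype.sum_prod_type, Fintype.sum_option, omegaMass,
          tsum_indicator_pathProb_cons M fun _ => cons_none_mem_Omega_iff n.succ_ne_zero,
          tsum_indicator_pathProb_cons M fun _ => cons_some_mem_Omega_iff]

end HMMeps

open HMMeps in
/-- With `Sⁿ_{s₀} = ∑_{z̃ ∈ Ωⁿ_{s₀}} Pⁿ_{s₀}(z̃)` one has `S⁰_{s₀} = 1`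
and, for `n ≥ 1`, the recursion
`Sⁿ_{s₀} = ∑_{s₁} δ(s₀)(ε,s₁)·Sⁿ_{s₁} + ∑_{a₁∈Σ, s₁} δ(s₀)(a₁,s₁)·Sⁿ⁻¹_{s₁}`. -/
theorem omega_sum_recursion {S A : Type*} [Fintype S] [Fintype A]
    (M : HMMeps S A) (s₀ : S) (n : ℕ) (hn : 1 ≤ n) :
    (∑' z : Omega S A 0, M.pathProb s₀ z.1) = 1 ∧
    (∑' z : Omega S A n, M.pathProb s₀ z.1)
      = (∑ s₁ : S, M.δ s₀ (none, s₁) * ∑' z : Omega S A n, M.pathProb s₁ z.1)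
        + ∑ a₁ : A, ∑ s₁ : S,
            M.δ s₀ (some a₁, s₁) * ∑' z : Omega S A (n - 1), M.pathProb s₁ z.1 := by
  obtain ⟨m, rfl⟩ := Nat.exists_eq_add_of_le' hn
  exact ⟨M.omegaMass_zero s₀, M.omegaMass_succ m s₀⟩
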